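/- Let N ≥ 3, s ∈ (1/2, 1), δ > 0 and 0 < Λ₁ ≤ Λ₂. Then there exists a constant C > 0, depending only on N, s, δ, Λ₁, Λ₂, such that for every x ∈ ℝ^N, every Λ ∈ [Λ₁, Λ₂] and every (y,t) ∈ ℝ^N × (0,∞) with |y−x|² + t² = δ², the s-Poisson extension Ũ_{x,Λ} of the bubble U_{x,Λ} is differentiable at (y,t) and its total derivative satisfies ‖∇_{(y,t)} Ũ_{x,Λ}(y,t)‖ ≤ C (1+|y−x|)^{−(N−2s+1)}. -/

import Mathlib

/-!
For `t > 0` the substitution `ξ = y - t η` writes the extension as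
`β ∫ (|η|² + 1)^{-(N+2s)/2} U(y - t η) dη`, all powers of `t` cancelling. The bubble is smooth
with gradient bounded by a constant depending only on `N, s, Λ₂`, so one may differentiate under
the integral sign with the dominating function `(|η|² + 1)^{-(N+2s)/2} (1 + |η|)`, which is
integrable precisely because `2s > 1`. This bounds the gradient uniformly in `x, Λ, y, t`; on the
sphere `|y - x| ≤ δ`, so `(1 + |y - x|)^{-(N-2s+1)} ≥ (1 + δ)^{-(N-2s+1)}` and the uniform bound
is absorbed into `C`.
-/

open MeasureTheory

/-- The Aubin–Talenti bubble
`U_{x,Λ}(y) = (4^s γ)^{(N−2s)/4} (Λ/(1+Λ²|y−x|²))^{(N−2s)/2}`,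
where `γ = Γ((N+2s)/2)/Γ((N−2s)/2)`. -/
noncomputable def bubble (N : ℕ) (s : ℝ) (x : EuclideanSpace ℝ (Fin N)) (Λ : ℝ)
    (y : EuclideanSpace ℝ (Fin N)) : ℝ :=
  ((4 : ℝ) ^ s * (Real.Gamma (((N : ℝ) + 2 * s) / 2) / Real.Gamma (((N : ℝ) - 2 * s) / 2)))
      ^ (((N : ℝ) - 2 * s) / 4) *
    (Λ / (1 + Λ ^ 2 * ‖y - x‖ ^ 2)) ^ (((N : ℝ) - 2 * s) / 2)

/-- The normalizing constant `β(N,s)`, determined by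
`∫_{ℝ^N} β(N,s) (|x|²+1)^{−(N+2s)/2} dx = 1`. -/
noncomputable def poissonConst (N : ℕ) (s : ℝ) : ℝ :=
  (∫ x : EuclideanSpace ℝ (Fin N), (‖x‖ ^ 2 + 1) ^ (-((N : ℝ) + 2 * s) / 2))⁻¹

/-- The `s`-Poisson extension
`ũ(y,t) = β(N,s) ∫_{ℝ^N} t^{2s} (|y−ξ|²+t²)^{−(N+2s)/2} u(ξ) dξ`. -/
noncomputable def poissonExt (N : ℕ) (s : ℝ) (u : EuclideanSpace ℝ (Fin N) → ℝ)
    (y : EuclideanSpace ℝ (Fin N)) (t : ℝ) : ℝ :=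
  poissonConst N s *
    ∫ ξ : EuclideanSpace ℝ (Fin N),
      t ^ (2 * s) * (‖y - ξ‖ ^ 2 + t ^ 2) ^ (-((N : ℝ) + 2 * s) / 2) * u ξ

open Module Topology

lemma rpow_sq_add_one_le {a r : ℝ} (ha : 0 ≤ a) (hr : 0 ≤ r) :
    (a ^ 2 + 1) ^ (-r / 2) ≤ 2 ^ (r / 2) * (1 + a) ^ (-r) := by
  have hpos : 0 < (1 + a) ^ 2 / 2 := by positivity
  have hsq : (1 + a) ^ 2 / 2 ≤ a ^ 2 + 1 := by nlinarith [sq_nonneg (a - 1)]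
  calc (a ^ 2 + 1) ^ (-r / 2) ≤ ((1 + a) ^ 2 / 2) ^ (-r / 2) :=
        Real.rpow_le_rpow_of_nonpos hpos hsq (by linarith)
    _ = 2 ^ (r / 2) * (1 + a) ^ (-r) := by
        rw [Real.div_rpow (by positivity) zero_le_two, ← Real.rpow_natCast, ← Real.rpow_mul
          (by positivity), neg_div, Real.rpow_neg zero_le_two, div_inv_eq_mul, mul_comm]
        norm_num [mul_div_cancel₀]

lemma one_le_one_add_rpow_mul_one_add_rpow_neg {a b r : ℝ} (ha : 0 ≤ a) (hab : a ≤ b)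
    (hr : 0 ≤ r) : 1 ≤ (1 + b) ^ r * (1 + a) ^ (-r) := by
  rw [Real.rpow_neg (by positivity), ← div_eq_mul_inv, one_le_div (by positivity)]
  gcongr

lemma continuous_rpow_norm_sq_add_one {E : Type*} [SeminormedAddCommGroup E] (q : ℝ) :
    Continuous fun η : E => (‖η‖ ^ 2 + 1) ^ q :=
  ((continuous_norm.pow 2).add continuous_const).rpow_const
    fun η => Or.inl (by positivity : (0 : ℝ) < ‖η‖ ^ 2 + 1).ne'

section PoissonKernel

variable {E : Type*} [NormedAddCommGroup E] [NormedSpace ℝ E] [MeasurableSpace E] [BorelSpace E]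
  [FiniteDimensional ℝ E] {μ : Measure E} [μ.IsAddHaarMeasure]

lemma integrable_rpow_norm_sq_add_one_mul_one_add_norm {r : ℝ} (hr : (finrank ℝ E : ℝ) + 1 < r) :
    Integrable (fun η : E => (‖η‖ ^ 2 + 1) ^ (-r / 2) * (1 + ‖η‖)) μ := by
  have hcont : Continuous fun η : E => (‖η‖ ^ 2 + 1) ^ (-r / 2) * (1 + ‖η‖) :=
    (continuous_rpow_norm_sq_add_one _).mul (continuous_const.add continuous_norm)
  refine ((integrable_one_add_norm (μ := μ) (r := r - 1) (by linarith)).const_mul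
    (2 ^ (r / 2))).mono' hcont.aestronglyMeasurable (ae_of_all _ fun η => ?_)
  have h1 : (0 : ℝ) < 1 + ‖η‖ := by positivity
  rw [Real.norm_of_nonneg (by positivity)]
  calc (‖η‖ ^ 2 + 1) ^ (-r / 2) * (1 + ‖η‖)
      ≤ 2 ^ (r / 2) * (1 + ‖η‖) ^ (-r) * (1 + ‖η‖) := by
        gcongr
        exact rpow_sq_add_one_le (norm_nonneg η) (by linarith [(finrank ℝ E).cast_nonneg (α := ℝ)])
    _ = 2 ^ (r / 2) * (1 + ‖η‖) ^ (-(r - 1)) := by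
        rw [mul_assoc, ← Real.rpow_add_one h1.ne']; ring_nf

lemma integral_kernel_mul_eq_integral_comp_sub_smul (a : ℝ) (u : E → ℝ) (y : E) {t : ℝ}
    (ht : 0 < t) :
    ∫ ξ, t ^ a * (‖y - ξ‖ ^ 2 + t ^ 2) ^ (-((finrank ℝ E : ℝ) + a) / 2) * u ξ ∂μ =
      ∫ η, (‖η‖ ^ 2 + 1) ^ (-((finrank ℝ E : ℝ) + a) / 2) * u (y - t • η) ∂μ := by
  set e := -((finrank ℝ E : ℝ) + a) / 2
  set G : E → ℝ := fun z => t ^ a * (‖z‖ ^ 2 + t ^ 2) ^ e * u (y - z)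
  have hG : ∀ η : E, G (t • η) = t ^ a * (t ^ 2) ^ e * ((‖η‖ ^ 2 + 1) ^ e * u (y - t • η)) := by
    intro η
    simp only [G, norm_smul, Real.norm_of_nonneg ht.le, mul_pow]
    rw [show t ^ 2 * ‖η‖ ^ 2 + t ^ 2 = t ^ 2 * (‖η‖ ^ 2 + 1) by ring,
      Real.mul_rpow (by positivity) (by positivity)]
    ring
  -- the powers of `t` cancel against the Jacobian `t ^ finrank` of `η ↦ t • η`
  have hscale : t ^ finrank ℝ E * (t ^ a * (t ^ 2) ^ e) = 1 := by
    rw [← Real.rpow_natCast, ← Real.rpow_natCast t 2, ← Real.rpow_mul ht.le, ← Real.rpow_add ht,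
      ← Real.rpow_add ht, show (finrank ℝ E : ℝ) + (a + ((2 : ℕ) : ℝ) * e) = 0 by
        simp only [e]; push_cast; ring, Real.rpow_zero]
  calc ∫ ξ, t ^ a * (‖y - ξ‖ ^ 2 + t ^ 2) ^ e * u ξ ∂μ = ∫ ξ, G (y - ξ) ∂μ := by
        simp only [G, sub_sub_cancel]
    _ = ∫ z, G z ∂μ := integral_sub_left_eq_self G μ y
    _ = t ^ finrank ℝ E * ∫ η, G (t • η) ∂μ := by
        rw [Measure.integral_comp_smul, abs_of_pos (by positivity), smul_eq_mul, ← mul_assoc,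
          mul_inv_cancel₀ (by positivity), one_mul]
    _ = ∫ η, (‖η‖ ^ 2 + 1) ^ e * u (y - t • η) ∂μ := by
        rw [funext hG, integral_const_mul, ← mul_assoc, hscale, one_mul]

end PoissonKernel

section DifferentiationUnderIntegral

variable {E : Type*} [NormedAddCommGroup E] [NormedSpace ℝ E]

lemma norm_fst_sub_smulRight_snd_le (η : E) :
    ‖ContinuousLinearMap.fst ℝ E ℝ - (ContinuousLinearMap.snd ℝ E ℝ).smulRight η‖ ≤ 1 + ‖η‖ :=
  calc _ ≤ ‖ContinuousLinearMap.fst ℝ E ℝ‖ + ‖(ContinuousLinearMap.snd ℝ E ℝ).smulRight η‖ :=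
        norm_sub_le _ _
    _ ≤ 1 + 1 * ‖η‖ := by
        rw [ContinuousLinearMap.norm_smulRight_apply]
        gcongr
        exacts [ContinuousLinearMap.norm_fst_le ℝ E ℝ, ContinuousLinearMap.norm_snd_le ℝ E ℝ]
    _ = 1 + ‖η‖ := by rw [one_mul]

variable [MeasurableSpace E] [BorelSpace E] {μ : Measure E}

-- `u` is `M`-Lipschitz, so the integrand grows at most like `w η * (1 + ‖η‖)`
lemma integrable_mul_comp_sub_smul {w : E → ℝ} (hw : AEStronglyMeasurable w μ)
    (hw_nonneg : ∀ η, 0 ≤ w η) (hw_int : Integrable (fun η => w η * (1 + ‖η‖)) μ)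
    {u : E → ℝ} (hu : Differentiable ℝ u) {M : ℝ} (hM : ∀ z, ‖fderiv ℝ u z‖ ≤ M) (y : E) (t : ℝ) :
    Integrable (fun η => w η * u (y - t • η)) μ := by
  have hM_nonneg : 0 ≤ M := (norm_nonneg _).trans (hM 0)
  have hmeas : AEStronglyMeasurable (fun η => w η * u (y - t • η)) μ :=
    hw.mul (hu.continuous.comp (continuous_const.sub (continuous_const_smul t))).aestronglyMeasurable
  refine (hw_int.const_mul (|u y| + M * |t|)).mono' hmeas (ae_of_all _ fun η => ?_)
  have hlip : ‖u (y - t • η) - u y‖ ≤ M * ‖y - t • η - y‖ :=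
    convex_univ.norm_image_sub_le_of_norm_fderiv_le (fun z _ => hu z) (fun z _ => hM z)
      trivial trivial
  rw [sub_sub_cancel_left, norm_neg, norm_smul, Real.norm_eq_abs, Real.norm_eq_abs] at hlip
  have hgrowth : |u (y - t • η)| ≤ |u y| + M * |t| * ‖η‖ := by
    linarith [abs_sub_abs_le_abs_sub (u (y - t • η)) (u y)]
  rw [norm_mul, Real.norm_of_nonneg (hw_nonneg η), Real.norm_eq_abs]
  have hMt : 0 ≤ M * |t| := by positivity
  nlinarith [mul_le_mul_of_nonneg_left hgrowth (hw_nonneg η), mul_nonneg (hw_nonneg η) hMt,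
    mul_nonneg (hw_nonneg η) (mul_nonneg (abs_nonneg (u y)) (norm_nonneg η))]

lemma differentiableAt_integral_mul_comp_sub_smul [SecondCountableTopology E] {w : E → ℝ}
    (hw : AEStronglyMeasurable w μ) (hw_nonneg : ∀ η, 0 ≤ w η)
    (hw_int : Integrable (fun η => w η * (1 + ‖η‖)) μ)
    {u : E → ℝ} (hu : ContDiff ℝ 1 u) {M : ℝ} (hM : ∀ z, ‖fderiv ℝ u z‖ ≤ M) (p₀ : E × ℝ) :
    DifferentiableAt ℝ (fun p : E × ℝ => ∫ η, w η * u (p.1 - p.2 • η) ∂μ) p₀ ∧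
      ‖fderiv ℝ (fun p : E × ℝ => ∫ η, w η * u (p.1 - p.2 • η) ∂μ) p₀‖ ≤
        M * ∫ η, w η * (1 + ‖η‖) ∂μ := by
  set L : E → (E × ℝ →L[ℝ] E) := fun η =>
    ContinuousLinearMap.fst ℝ E ℝ - (ContinuousLinearMap.snd ℝ E ℝ).smulRight η
  set F' : E × ℝ → E → (E × ℝ →L[ℝ] ℝ) := fun p η =>
    w η • (fderiv ℝ u (p.1 - p.2 • η)).comp (L η)
  have hu_diff : Differentiable ℝ u := hu.differentiable one_ne_zero
  have hu_cont : Continuous u := hu_diff.continuous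
  have hM_nonneg : 0 ≤ M := (norm_nonneg _).trans (hM 0)
  have hderiv : ∀ η p, HasFDerivAt (fun p : E × ℝ => w η * u (p.1 - p.2 • η)) (F' p η) p :=
    fun η p => (((hu_diff _).hasFDerivAt.comp p (L η).hasFDerivAt).const_mul (w η))
  have hbound : ∀ η p, ‖F' p η‖ ≤ M * (w η * (1 + ‖η‖)) := fun η p =>
    calc ‖F' p η‖ = w η * ‖(fderiv ℝ u (p.1 - p.2 • η)).comp (L η)‖ := by
          rw [norm_smul, Real.norm_of_nonneg (hw_nonneg η)]
      _ ≤ w η * (M * (1 + ‖η‖)) := by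
          gcongr
          · exact hw_nonneg η
          exact (ContinuousLinearMap.opNorm_comp_le _ _).trans
            (mul_le_mul (hM _) (norm_fst_sub_smulRight_snd_le η) (norm_nonneg _) hM_nonneg)
      _ = M * (w η * (1 + ‖η‖)) := by ring
  have hmeas : ∀ p : E × ℝ, AEStronglyMeasurable (fun η => w η * u (p.1 - p.2 • η)) μ := fun p =>
    hw.mul (hu_cont.comp (continuous_const.sub (continuous_const_smul p.2))).aestronglyMeasurable
  have hF'meas : AEStronglyMeasurable (F' p₀) μ :=
    hw.smul ((hu.continuous_fderiv one_ne_zero).comp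
      (continuous_const.sub (continuous_const_smul p₀.2)) |>.clm_comp
        (continuous_const.sub ((ContinuousLinearMap.smulRightL ℝ (E × ℝ) E)
          (ContinuousLinearMap.snd ℝ E ℝ)).continuous)).aestronglyMeasurable
  have hF := hasFDerivAt_integral_of_dominated_of_fderiv_le Filter.univ_mem
    (Filter.Eventually.of_forall hmeas)
    (integrable_mul_comp_sub_smul hw hw_nonneg hw_int hu_diff hM p₀.1 p₀.2) hF'meas
    (ae_of_all _ fun η p _ => hbound η p) (hw_int.const_mul M)
    (ae_of_all _ fun η p _ => hderiv η p)
  refine ⟨hF.differentiableAt, ?_⟩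
  rw [hF.fderiv, ← integral_const_mul]
  exact norm_integral_le_of_norm_le (hw_int.const_mul M) (ae_of_all _ fun η => hbound η p₀)

end DifferentiationUnderIntegral

section Bubble

variable {F : Type*} [NormedAddCommGroup F] [InnerProductSpace ℝ F]

lemma hasFDerivAt_one_add_sq_mul_norm_sub_sq_rpow (Λ q : ℝ) (x z : F) :
    HasFDerivAt (fun z => (1 + Λ ^ 2 * ‖z - x‖ ^ 2) ^ q)
      ((2 * q * Λ ^ 2 * (1 + Λ ^ 2 * ‖z - x‖ ^ 2) ^ (q - 1)) • innerSL ℝ (z - x)) z := by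
  have hbase : 1 + Λ ^ 2 * ‖z - x‖ ^ 2 ≠ 0 := by positivity
  have h := ((((hasFDerivAt_id z).sub_const x).norm_sq.const_mul (Λ ^ 2)).const_add 1).rpow_const
    (p := q) (Or.inl hbase)
  refine h.congr_fderiv (ContinuousLinearMap.ext fun v => ?_)
  simp only [id_eq, ContinuousLinearMap.comp_id, smul_apply, coe_innerSL_apply, nsmul_eq_mul,
    Nat.cast_ofNat, smul_eq_mul]
  ring

lemma norm_fderiv_one_add_sq_mul_norm_sub_sq_rpow_neg_le {Λ p : ℝ} (hΛ : 0 ≤ Λ) (hp : 0 ≤ p)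
    (x z : F) : ‖fderiv ℝ (fun z => (1 + Λ ^ 2 * ‖z - x‖ ^ 2) ^ (-p)) z‖ ≤ p * Λ := by
  rw [(hasFDerivAt_one_add_sq_mul_norm_sub_sq_rpow Λ (-p) x z).fderiv, norm_smul,
    innerSL_apply_norm, Real.norm_eq_abs]
  set X := 1 + Λ ^ 2 * ‖z - x‖ ^ 2
  have hX : 1 ≤ X := by simp only [X]; nlinarith [sq_nonneg (Λ * ‖z - x‖)]
  have hXpos : 0 < X := by linarith
  have hAMGM : 2 * Λ * ‖z - x‖ ≤ X := by simp only [X]; nlinarith [sq_nonneg (Λ * ‖z - x‖ - 1)]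
  have hcoeff : 0 ≤ p * Λ ^ 2 * X ^ (-p - 1) := by positivity
  rw [abs_of_nonpos (by linarith)]
  calc -(2 * -p * Λ ^ 2 * X ^ (-p - 1)) * ‖z - x‖ = p * Λ * (2 * Λ * ‖z - x‖ * X ^ (-p - 1)) := by
        ring
    _ ≤ p * Λ * (X * X ^ (-p - 1)) := by gcongr
    _ = p * Λ * X ^ (-p) := by rw [mul_comm X, ← Real.rpow_add_one hXpos.ne', sub_add_cancel]
    _ ≤ p * Λ * 1 := by gcongr; exact Real.rpow_le_one_of_one_le_of_nonpos hX (by linarith)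
    _ = p * Λ := mul_one _

noncomputable def bubbleConst (N : ℕ) (s : ℝ) : ℝ :=
  ((4 : ℝ) ^ s * (Real.Gamma (((N : ℝ) + 2 * s) / 2) / Real.Gamma (((N : ℝ) - 2 * s) / 2)))
    ^ (((N : ℝ) - 2 * s) / 4)

variable {N : ℕ} {s Λ : ℝ} (x : EuclideanSpace ℝ (Fin N))

lemma bubble_eq (hΛ : 0 < Λ) :
    bubble N s x Λ = fun z => bubbleConst N s * Λ ^ (((N : ℝ) - 2 * s) / 2) *
      (1 + Λ ^ 2 * ‖z - x‖ ^ 2) ^ (-(((N : ℝ) - 2 * s) / 2)) := by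
  funext z
  have hbase : 0 < 1 + Λ ^ 2 * ‖z - x‖ ^ 2 := by positivity
  rw [bubble, Real.div_rpow hΛ.le hbase.le, Real.rpow_neg hbase.le, bubbleConst]
  ring

lemma contDiff_bubble (hΛ : 0 < Λ) {n : WithTop ℕ∞} : ContDiff ℝ n (bubble N s x Λ) := by
  rw [bubble_eq x hΛ]
  exact contDiff_const.mul (((contDiff_const.add (contDiff_const.mul
    ((contDiff_norm_sq ℝ).comp (contDiff_id.sub contDiff_const)))).rpow_const_of_ne
      fun z => (by positivity : (0 : ℝ) < 1 + Λ ^ 2 * ‖z - x‖ ^ 2).ne'))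

lemma norm_fderiv_bubble_le (hΛ : 0 < Λ) (hsN : 2 * s ≤ N) (z : EuclideanSpace ℝ (Fin N)) :
    ‖fderiv ℝ (bubble N s x Λ) z‖ ≤
      |bubbleConst N s| * Λ ^ (((N : ℝ) - 2 * s) / 2) * ((((N : ℝ) - 2 * s) / 2) * Λ) := by
  have hdiff : DifferentiableAt ℝ
      (fun z => (1 + Λ ^ 2 * ‖z - x‖ ^ 2) ^ (-(((N : ℝ) - 2 * s) / 2))) z :=
    (hasFDerivAt_one_add_sq_mul_norm_sub_sq_rpow Λ _ x z).differentiableAt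
  rw [bubble_eq x hΛ, fderiv_const_mul hdiff, norm_smul, Real.norm_eq_abs, abs_mul,
    abs_of_pos (Real.rpow_pos_of_pos hΛ _)]
  gcongr
  exact norm_fderiv_one_add_sq_mul_norm_sub_sq_rpow_neg_le hΛ.le (by linarith) x z

end Bubble

section PoissonExtension

variable {N : ℕ} {s : ℝ}

lemma poissonExt_eq_integral_comp_sub_smul (u : EuclideanSpace ℝ (Fin N) → ℝ)
    (y : EuclideanSpace ℝ (Fin N)) {t : ℝ} (ht : 0 < t) :
    poissonExt N s u y t = poissonConst N s *
      ∫ η : EuclideanSpace ℝ (Fin N), (‖η‖ ^ 2 + 1) ^ (-((N : ℝ) + 2 * s) / 2) * u (y - t • η) := by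
  have h := integral_kernel_mul_eq_integral_comp_sub_smul (μ := volume) (2 * s) u y ht
  rw [finrank_euclideanSpace_fin] at h
  rw [poissonExt, h]

lemma differentiableAt_poissonExt_and_norm_fderiv_le (hs : 1 / 2 < s)
    {u : EuclideanSpace ℝ (Fin N) → ℝ} (hu : ContDiff ℝ 1 u) {M : ℝ}
    (hM : ∀ z, ‖fderiv ℝ u z‖ ≤ M) (y : EuclideanSpace ℝ (Fin N)) {t : ℝ} (ht : 0 < t) :
    DifferentiableAt ℝ (fun p : EuclideanSpace ℝ (Fin N) × ℝ => poissonExt N s u p.1 p.2) (y, t) ∧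
      ‖fderiv ℝ (fun p : EuclideanSpace ℝ (Fin N) × ℝ => poissonExt N s u p.1 p.2) (y, t)‖ ≤
        |poissonConst N s| * (M * ∫ η : EuclideanSpace ℝ (Fin N),
          (‖η‖ ^ 2 + 1) ^ (-((N : ℝ) + 2 * s) / 2) * (1 + ‖η‖)) := by
  set w : EuclideanSpace ℝ (Fin N) → ℝ := fun η => (‖η‖ ^ 2 + 1) ^ (-((N : ℝ) + 2 * s) / 2)
  have hw : Continuous w := continuous_rpow_norm_sq_add_one _
  have hw_int : Integrable (fun η => w η * (1 + ‖η‖)) :=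
    integrable_rpow_norm_sq_add_one_mul_one_add_norm (by rw [finrank_euclideanSpace_fin]; linarith)
  have hev : (fun p : EuclideanSpace ℝ (Fin N) × ℝ => poissonExt N s u p.1 p.2) =ᶠ[𝓝 (y, t)]
      fun p => poissonConst N s * ∫ η, w η * u (p.1 - p.2 • η) := by
    filter_upwards [(isOpen_lt continuous_const continuous_snd).mem_nhds ht] with p hp
    exact poissonExt_eq_integral_comp_sub_smul u p.1 hp
  obtain ⟨hdiff, hbound⟩ := differentiableAt_integral_mul_comp_sub_smul hw.aestronglyMeasurable
    (fun η => by positivity) hw_int hu hM (y, t)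
  refine ⟨(hdiff.const_mul _).congr_of_eventuallyEq hev, ?_⟩
  rw [hev.fderiv_eq, fderiv_const_mul hdiff, norm_smul, Real.norm_eq_abs]
  gcongr

end PoissonExtension

theorem stmt_9_general (N : ℕ) (hN : 3 ≤ N) (s : ℝ) (hs : s ∈ Set.Ioo (1 / 2 : ℝ) 1)
    (δ : ℝ) (hδ : 0 < δ) (Λ₁ Λ₂ : ℝ) (hΛ₁ : 0 < Λ₁) :
    ∃ C > 0, ∀ (x : EuclideanSpace ℝ (Fin N)), ∀ Λ ∈ Set.Icc Λ₁ Λ₂,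
      ∀ (y : EuclideanSpace ℝ (Fin N)) (t : ℝ), 0 < t → ‖y - x‖ ^ 2 + t ^ 2 = δ ^ 2 →
        DifferentiableAt ℝ
            (fun p : EuclideanSpace ℝ (Fin N) × ℝ =>
              poissonExt N s (bubble N s x Λ) p.1 p.2) (y, t) ∧
          ‖fderiv ℝ
              (fun p : EuclideanSpace ℝ (Fin N) × ℝ =>
                poissonExt N s (bubble N s x Λ) p.1 p.2) (y, t)‖ ≤
            C * (1 + ‖y - x‖) ^ (-((N : ℝ) - 2 * s + 1)) := by
  obtain ⟨hs₁, hs₂⟩ := hs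
  have hN' : (3 : ℝ) ≤ N := by exact_mod_cast hN
  have hsN : 2 * s ≤ N := by linarith
  set M := |bubbleConst N s| * Λ₂ ^ (((N : ℝ) - 2 * s) / 2) * ((((N : ℝ) - 2 * s) / 2) * Λ₂)
  set K := |poissonConst N s| * (M * ∫ η : EuclideanSpace ℝ (Fin N),
    (‖η‖ ^ 2 + 1) ^ (-((N : ℝ) + 2 * s) / 2) * (1 + ‖η‖))
  refine ⟨(|K| + 1) * (1 + δ) ^ ((N : ℝ) - 2 * s + 1), by positivity, ?_⟩
  rintro x Λ ⟨hΛ₁Λ, hΛΛ₂⟩ y t ht hsphere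
  have hΛ_pos : 0 < Λ := hΛ₁.trans_le hΛ₁Λ
  have hM : ∀ z, ‖fderiv ℝ (bubble N s x Λ) z‖ ≤ M := fun z =>
    (norm_fderiv_bubble_le x hΛ_pos hsN z).trans (by
      simp only [M]
      gcongr
      exact mul_nonneg (abs_nonneg _) (Real.rpow_nonneg (hΛ_pos.le.trans hΛΛ₂) _))
  obtain ⟨hdiff, hbound⟩ :=
    differentiableAt_poissonExt_and_norm_fderiv_le hs₁ (contDiff_bubble x hΛ_pos) hM y ht
  have hdist : ‖y - x‖ ≤ δ := by nlinarith [norm_nonneg (y - x)]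
  refine ⟨hdiff, hbound.trans ?_⟩
  calc K ≤ (|K| + 1) * 1 := by linarith [le_abs_self K]
    _ ≤ (|K| + 1) *
        ((1 + δ) ^ ((N : ℝ) - 2 * s + 1) * (1 + ‖y - x‖) ^ (-((N : ℝ) - 2 * s + 1))) := by
        gcongr
        exact one_le_one_add_rpow_mul_one_add_rpow_neg (norm_nonneg _) hdist (by linarith)
    _ = _ := by ring

/-- For `N ≥ 3`, `s ∈ (1/2,1)`, `δ > 0` and `0 < Λ₁ ≤ Λ₂`, there is
`C > 0` such that for all `x`, `Λ ∈ [Λ₁,Λ₂]` and `(y,t)` with `t > 0` and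
`|y−x|² + t² = δ²`, the extension `Ũ_{x,Λ}` is differentiable at `(y,t)` and
`‖∇Ũ_{x,Λ}(y,t)‖ ≤ C(1+|y−x|)^{−(N−2s+1)}`. -/
theorem stmt_9 (N : ℕ) (hN : 3 ≤ N) (s : ℝ) (hs : s ∈ Set.Ioo (1 / 2 : ℝ) 1)
    (δ : ℝ) (hδ : 0 < δ) (Λ₁ Λ₂ : ℝ) (hΛ₁ : 0 < Λ₁) (hΛ : Λ₁ ≤ Λ₂) :
    ∃ C > 0, ∀ (x : EuclideanSpace ℝ (Fin N)), ∀ Λ ∈ Set.Icc Λ₁ Λ₂,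
      ∀ (y : EuclideanSpace ℝ (Fin N)) (t : ℝ), 0 < t → ‖y - x‖ ^ 2 + t ^ 2 = δ ^ 2 →
        DifferentiableAt ℝ
            (fun p : EuclideanSpace ℝ (Fin N) × ℝ =>
              poissonExt N s (bubble N s x Λ) p.1 p.2) (y, t) ∧
          ‖fderiv ℝ
              (fun p : EuclideanSpace ℝ (Fin N) × ℝ =>
                poissonExt N s (bubble N s x Λ) p.1 p.2) (y, t)‖ ≤
            C * (1 + ‖y - x‖) ^ (-((N : ℝ) - 2 * s + 1)) :=
  stmt_9_general N hN s hs δ hδ Λ₁ Λ₂ hΛ₁
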